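/- arXiv:1205.1226 — 2 statements merged into one kernel-verified Lean document; each statement's English description precedes it below -/
import Mathlib

section
/- There exists a sequence of positive integers ν_m → ∞ such that the sets S¹ ∩ (1/√ν_m)ℤ² = { k/√ν_m : k ∈ ℤ², |k|² = ν_m } converge, in the Hausdorff distance, to the full unit circle S¹ ⊂ ℝ² as m → ∞. Equivalently, for every ε > 0 there exists m₀ such that for all m ≥ m₀ and every x ∈ S¹ there is k ∈ ℤ² with |k|² = ν_m and |x − k/√ν_m| < ε. -/
/-!
Rational points of `S¹` are `((q² - p²) / (p² + q²), 2pq / (p² + q²))`, the image of `p / q`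
under the stereographic parametrization `t ↦ ((1 - t²) / (1 + t²), 2t / (1 + t²))`, which is
2-Lipschitz. Every point of the right half circle has a parameter `t ∈ [-1, 1]`, so taking
`p = ⌊N t⌋`, `q = N` gives a lattice point on a circle of radius `c ≤ 2N²` within `2/N` of it
(the left half circle follows by `x ↦ -x`). For `m ≥ 2N²` every such `c` divides `m!`, so
scaling puts all of these points on the single circle of radius `m!`: take `ν_m = (m!)²`.
-/

open Filter

theorem sq_dist_rationalParam (t p q : ℝ) (hpq : p ^ 2 + q ^ 2 ≠ 0) :
    ((1 - t ^ 2) / (1 + t ^ 2) - (q ^ 2 - p ^ 2) / (p ^ 2 + q ^ 2)) ^ 2 +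
        (2 * t / (1 + t ^ 2) - 2 * p * q / (p ^ 2 + q ^ 2)) ^ 2 =
      4 * (q * t - p) ^ 2 / ((1 + t ^ 2) * (p ^ 2 + q ^ 2)) := by
  have ht : 1 + t ^ 2 ≠ 0 := by positivity
  field_simp
  ring

theorem exists_rationalParam_of_nonneg {x₀ x₁ : ℝ} (hx : x₀ ^ 2 + x₁ ^ 2 = 1)
    (hx₀ : 0 ≤ x₀) :
    ∃ t : ℝ, |t| ≤ 1 ∧ x₀ = (1 - t ^ 2) / (1 + t ^ 2) ∧ x₁ = 2 * t / (1 + t ^ 2) := by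
  have h : 0 < 1 + x₀ := by positivity
  refine ⟨x₁ / (1 + x₀), ?_, ?_, ?_⟩
  · rw [abs_le, le_div_iff₀ h, div_le_one h]
    constructor <;> nlinarith
  · field_simp
    linear_combination (1 + x₀) * hx
  · field_simp
    linear_combination x₁ * hx

theorem natAbs_floor_mul_le {t : ℝ} (ht : |t| ≤ 1) (N : ℕ) : ⌊N * t⌋.natAbs ≤ N := by
  obtain ⟨ht₁, ht₂⟩ := abs_le.1 ht
  have hN : (0 : ℝ) ≤ N := N.cast_nonneg
  have hlow : -(N : ℤ) ≤ ⌊N * t⌋ := Int.le_floor.2 (by push_cast; nlinarith)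
  have hupp : ⌊N * t⌋ ≤ N := Int.floor_le_iff.2 (by push_cast; nlinarith)
  omega

theorem exists_pythagorean_near_of_nonneg {x : Fin 2 → ℝ} (hx : x 0 ^ 2 + x 1 ^ 2 = 1)
    (hx₀ : 0 ≤ x 0) {N : ℕ} (hN : 0 < N) :
    ∃ c : ℕ, 0 < c ∧ c ≤ 2 * N ^ 2 ∧ ∃ k : Fin 2 → ℤ, k 0 ^ 2 + k 1 ^ 2 = (c : ℤ) ^ 2 ∧
      √((x 0 - k 0 / c) ^ 2 + (x 1 - k 1 / c) ^ 2) ≤ 2 / N := by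
  obtain ⟨t, ht, hx₀t, hx₁t⟩ := exists_rationalParam_of_nonneg hx hx₀
  set p := ⌊N * t⌋
  have hp : p.natAbs ≤ N := natAbs_floor_mul_le ht N
  have hcast : ((p.natAbs ^ 2 + N ^ 2 : ℕ) : ℝ) = p ^ 2 + N ^ 2 := by
    push_cast [Nat.cast_natAbs, sq_abs]; rfl
  have hc : p.natAbs ^ 2 + N ^ 2 ≤ 2 * N ^ 2 := by
    have := Nat.pow_le_pow_left hp 2
    omega
  refine ⟨p.natAbs ^ 2 + N ^ 2, by positivity, hc, ![N ^ 2 - p ^ 2, 2 * p * N], ?_, ?_⟩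
  · simp only [Matrix.cons_val_zero, Matrix.cons_val_one, Matrix.cons_val_fin_one]
    push_cast [Int.natCast_natAbs, sq_abs]
    ring
  · have hNR : (0 : ℝ) < N := by exact_mod_cast hN
    have hfloor : ((N : ℝ) * t - p) ^ 2 ≤ 1 := by
      have := Int.floor_le ((N : ℝ) * t)
      have := Int.lt_floor_add_one ((N : ℝ) * t)
      nlinarith
    simp only [Matrix.cons_val_zero, Matrix.cons_val_one, Matrix.cons_val_fin_one, hcast,
      hx₀t, hx₁t]
    push_cast
    rw [sq_dist_rationalParam t p N (by positivity), Real.sqrt_le_left (by positivity),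
      div_pow, div_le_div_iff₀ (by positivity) (by positivity)]
    nlinarith [sq_nonneg t, sq_nonneg (p : ℝ)]

theorem exists_pythagorean_near {x : Fin 2 → ℝ} (hx : x 0 ^ 2 + x 1 ^ 2 = 1) {N : ℕ}
    (hN : 0 < N) :
    ∃ c : ℕ, 0 < c ∧ c ≤ 2 * N ^ 2 ∧ ∃ k : Fin 2 → ℤ, k 0 ^ 2 + k 1 ^ 2 = (c : ℤ) ^ 2 ∧
      √((x 0 - k 0 / c) ^ 2 + (x 1 - k 1 / c) ^ 2) ≤ 2 / N := by
  rcases le_total 0 (x 0) with hx₀ | hx₀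
  · exact exists_pythagorean_near_of_nonneg hx hx₀ hN
  have hx' : (-x) 0 ^ 2 + (-x) 1 ^ 2 = 1 := by simpa only [Pi.neg_apply, neg_sq] using hx
  obtain ⟨c, hc, hcN, k, hk, hdist⟩ :=
    exists_pythagorean_near_of_nonneg hx' (by simpa using hx₀) hN
  refine ⟨c, hc, hcN, -k, by simpa only [Pi.neg_apply, neg_sq] using hk, ?_⟩
  convert hdist using 2
  simp only [Pi.neg_apply, Int.cast_neg, neg_div]
  ring

theorem exists_lattice_point_div_eq {c M : ℕ} (hcM : c ∣ M) (hM : 0 < M) {k : Fin 2 → ℤ}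
    (hk : k 0 ^ 2 + k 1 ^ 2 = (c : ℤ) ^ 2) :
    ∃ k' : Fin 2 → ℤ, k' 0 ^ 2 + k' 1 ^ 2 = (M : ℤ) ^ 2 ∧ ∀ i, (k' i : ℝ) / M = k i / c := by
  obtain ⟨d, rfl⟩ := hcM
  have hd : (d : ℝ) ≠ 0 := by exact_mod_cast (Nat.pos_of_mul_pos_left hM).ne'
  refine ⟨fun i => d * k i, by push_cast; linear_combination (d : ℤ) ^ 2 * hk, fun i => ?_⟩
  push_cast
  rw [mul_comm (c : ℝ), mul_div_mul_left _ _ hd]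

theorem exists_lattice_point_near_factorial {x : Fin 2 → ℝ} (hx : x 0 ^ 2 + x 1 ^ 2 = 1)
    {N m : ℕ} (hN : 0 < N) (hm : 2 * N ^ 2 ≤ m) :
    ∃ k : Fin 2 → ℤ, k 0 ^ 2 + k 1 ^ 2 = (m.factorial : ℤ) ^ 2 ∧
      √((x 0 - k 0 / m.factorial) ^ 2 + (x 1 - k 1 / m.factorial) ^ 2) ≤ 2 / N := by
  obtain ⟨c, hc, hcN, k, hk, hdist⟩ := exists_pythagorean_near hx hN
  obtain ⟨k', hk', hdiv⟩ :=
    exists_lattice_point_div_eq (Nat.dvd_factorial hc (hcN.trans hm)) m.factorial_pos hk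
  exact ⟨k', hk', by simpa only [hdiv] using hdist⟩

/-- **Rational directions on circles of integer radius-squared.** There is a sequence of
positive integers `ν_m → ∞` such that the renormalized lattice points
`{k/√ν_m : k ∈ ℤ², |k|² = ν_m}` converge to the full unit circle `S¹` in the Hausdorff sense:
for every `ε > 0`, eventually every point of `S¹` is within (Euclidean) distance `ε` of some
`k/√ν_m` with `k ∈ ℤ²`, `|k|² = ν_m`. -/
theorem lattice_circles_dense_in_S1 :
    ∃ ν : ℕ → ℕ,
      (∀ m, 0 < ν m) ∧
      Tendsto ν atTop atTop ∧
      ∀ ε > (0 : ℝ), ∃ m₀ : ℕ, ∀ m ≥ m₀,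
        ∀ x : Fin 2 → ℝ, (x 0) ^ 2 + (x 1) ^ 2 = 1 →
          ∃ k : Fin 2 → ℤ, (k 0) ^ 2 + (k 1) ^ 2 = (ν m : ℤ) ∧
            Real.sqrt ((x 0 - (k 0 : ℝ) / Real.sqrt (ν m)) ^ 2 +
              (x 1 - (k 1 : ℝ) / Real.sqrt (ν m)) ^ 2) < ε := by
  refine ⟨fun m => m.factorial ^ 2, fun m => by positivity, ?_, fun ε hε => ?_⟩
  · exact tendsto_atTop_mono
      (fun m => m.self_le_factorial.trans (Nat.le_self_pow two_ne_zero _)) tendsto_id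
  obtain ⟨n, hn⟩ := exists_nat_one_div_lt (half_pos hε)
  refine ⟨2 * (n + 1) ^ 2, fun m hm x hx => ?_⟩
  obtain ⟨k, hk, hdist⟩ := exists_lattice_point_near_factorial hx n.succ_pos hm
  have hsqrt : √((m.factorial ^ 2 : ℕ) : ℝ) = m.factorial := by
    push_cast
    exact Real.sqrt_sq m.factorial.cast_nonneg
  refine ⟨k, by exact_mod_cast hk, ?_⟩
  rw [hsqrt]
  calc _ ≤ 2 / ((n + 1 : ℕ) : ℝ) := hdist
    _ = 2 * (1 / (n + 1)) := by push_cast; ring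
    _ < ε := by linarith
end

section
/- For every smooth vector field v : 𝕋² → ℝ², let u : 𝕋² → ℝ² be the unique smooth solution of Δu = v − ⨍_{𝕋²} v with ⨍_{𝕋²} u = 0, and define the matrix field ℛv := ∇u + (∇u)^T − (div u) Id. Then for every x ∈ 𝕋², ℛv(x) is a symmetric trace-free 2×2 matrix, and div ℛv = v − ⨍_{𝕋²} v (where div applied to a matrix field is taken row-wise). In particular, for every smooth v : 𝕋² → ℝ² there exists a smooth symmetric trace-free matrix field S on 𝕋² with div S = v − ⨍_{𝕋²} v. -/
open MeasureTheory Real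

noncomputable section

/-- Partial derivative of `f` in the `j`-th coordinate direction at `x`. -/
def pd {d : ℕ} {E : Type*} [NormedAddCommGroup E] [NormedSpace ℝ E]
    (f : (Fin d → ℝ) → E) (j : Fin d) (x : Fin d → ℝ) : E :=
  fderiv ℝ f x (Pi.single j 1)

/-- The Laplacian `Δf = ∑_j ∂²_j f` of a scalar function. -/
def lap {d : ℕ} (f : (Fin d → ℝ) → ℝ) (x : Fin d → ℝ) : ℝ :=
  ∑ j, pd (fun y => pd f j y) j x

/-- The fundamental domain `[0,2π]²` of the flat torus `𝕋² = ℝ²/(2πℤ)²`. -/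
def torusBox : Set (Fin 2 → ℝ) := Set.Icc 0 (fun _ => 2 * π)

/-- `f` is `2π`-periodic in each coordinate, i.e. descends to the torus `ℝ²/(2πℤ)²`. -/
def PeriodicZd {E : Type*} (f : (Fin 2 → ℝ) → E) : Prop :=
  ∀ (x : Fin 2 → ℝ) (k : Fin 2 → ℤ), f (x + fun i => 2 * π * (k i : ℝ)) = f x

/-- The average `⨍_{𝕋²} f` of a scalar function over the torus. -/
def torusAvg (f : (Fin 2 → ℝ) → ℝ) : ℝ := (1 / (2 * π) ^ 2) * ∫ x in torusBox, f x

/-- The operator `ℛv = ∇u + (∇u)ᵀ − (div u) Id` where `Δu = v − ⨍v`, `⨍u = 0`. -/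
def Rop (u : (Fin 2 → ℝ) → Fin 2 → ℝ) (x : Fin 2 → ℝ) : Fin 2 → Fin 2 → ℝ := fun i j =>
  pd (fun y => u y i) j x + pd (fun y => u y j) i x -
    (if i = j then (∑ l, pd (fun y => u y l) l x) else 0)

/- Auxiliary lemmas -/

lemma contDiff_pd {d : ℕ} {f : (Fin d → ℝ) → ℝ} (hf : ContDiff ℝ (⊤ : ℕ∞) f) (j : Fin d) :
    ContDiff ℝ (⊤ : ℕ∞) (fun y => pd f j y) := by
  unfold pd
  exact (hf.fderiv_right (by simp)).clm_apply contDiff_const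

lemma pd_add {d : ℕ} {f g : (Fin d → ℝ) → ℝ} {x : Fin d → ℝ}
    (hf : DifferentiableAt ℝ f x) (hg : DifferentiableAt ℝ g x) (j : Fin d) :
    pd (fun y => f y + g y) j x = pd f j x + pd g j x := by
  unfold pd; rw [fderiv_fun_add hf hg]; simp

lemma pd_sub {d : ℕ} {f g : (Fin d → ℝ) → ℝ} {x : Fin d → ℝ}
    (hf : DifferentiableAt ℝ f x) (hg : DifferentiableAt ℝ g x) (j : Fin d) :
    pd (fun y => f y - g y) j x = pd f j x - pd g j x := by
  unfold pd; rw [fderiv_fun_sub hf hg]; simp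

lemma pd_sum {d n : ℕ} {f : Fin n → (Fin d → ℝ) → ℝ} {x : Fin d → ℝ}
    (hf : ∀ l, DifferentiableAt ℝ (f l) x) (j : Fin d) :
    pd (fun y => ∑ l, f l y) j x = ∑ l, pd (f l) j x := by
  unfold pd; rw [fderiv_fun_sum (fun l _ => hf l)]; simp

/-- Schwarz: second derivatives of a smooth function commute. -/
lemma pd_pd_symm {d : ℕ} {f : (Fin d → ℝ) → ℝ} (hf : ContDiff ℝ (⊤ : ℕ∞) f) (i j : Fin d)
    (x : Fin d → ℝ) :
    pd (fun y => pd f i y) j x = pd (fun y => pd f j y) i x := by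
  have hdf : ContDiff ℝ (⊤ : ℕ∞) (fderiv ℝ f) := hf.fderiv_right (by simp)
  have key : ∀ (a : Fin d → ℝ) (b : Fin d),
      pd (fun y => fderiv ℝ f y a) b x = fderiv ℝ (fderiv ℝ f) x (Pi.single b 1) a := by
    intro a b
    unfold pd
    rw [fderiv_clm_apply (hdf.differentiable (by simp) x) (differentiableAt_const a)]
    simp
  have hsymm : IsSymmSndFDerivAt ℝ f x := hf.contDiffAt.isSymmSndFDerivAt (by
    rw [minSmoothness_of_isRCLikeNormedField]; exact WithTop.coe_le_coe.mpr le_top)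
  show pd (fun y => fderiv ℝ f y (Pi.single i 1)) j x
      = pd (fun y => fderiv ℝ f y (Pi.single j 1)) i x
  rw [key, key, hsymm (Pi.single j 1) (Pi.single i 1)]

/-- **The inverse divergence operator `ℛ = div⁻¹` in 2D.** For a smooth periodic vector field
`v` on `𝕋²`, let `u` be the (unique) smooth periodic zero-average solution of `Δu = v − ⨍v`, and
set `ℛv := ∇u + (∇u)ᵀ − (div u) Id`. Then `ℛv(x)` is a symmetric trace-free 2×2 matrix for every
`x`, and `div ℛv = v − ⨍v` (row-wise divergence). In particular `v − ⨍v` is the divergence of a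
smooth symmetric trace-free matrix field. -/
theorem inverse_divergence_2d (v u : (Fin 2 → ℝ) → Fin 2 → ℝ)
    (hv : ContDiff ℝ (⊤ : ℕ∞) v) (hvper : PeriodicZd v)
    (hu : ContDiff ℝ (⊤ : ℕ∞) u) (huper : PeriodicZd u)
    (hupoisson : ∀ (x : Fin 2 → ℝ) (i : Fin 2),
      lap (fun y => u y i) x = v x i - torusAvg (fun y => v y i))
    (huavg : ∀ i : Fin 2, torusAvg (fun y => u y i) = 0) :
    -- `ℛv` is symmetric:
    (∀ (x : Fin 2 → ℝ) (i j : Fin 2), Rop u x i j = Rop u x j i) ∧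
    -- `ℛv` is trace-free:
    (∀ x : Fin 2 → ℝ, (∑ i, Rop u x i i) = 0) ∧
    -- `div ℛv = v − ⨍v`:
    (∀ (x : Fin 2 → ℝ) (i : Fin 2),
      (∑ j, pd (fun y => Rop u y i j) j x) = v x i - torusAvg (fun y => v y i)) := by
  -- components of u are smooth
  have hui : ∀ i : Fin 2, ContDiff ℝ (⊤ : ℕ∞) (fun y => u y i) := fun i =>
    (ContinuousLinearMap.proj i : (Fin 2 → ℝ) →L[ℝ] ℝ).contDiff.comp hu
  have hpdij : ∀ i j : Fin 2, ContDiff ℝ (⊤ : ℕ∞) (fun y => pd (fun z => u z i) j y) := fun i j =>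
    contDiff_pd (hui i) j
  have hdivu : ContDiff ℝ (⊤ : ℕ∞) (fun y => ∑ l, pd (fun z => u z l) l y) :=
    ContDiff.sum fun l _ => hpdij l l
  refine ⟨?_, ?_, ?_⟩
  · intro x i j
    simp only [Rop]
    by_cases h : i = j
    · subst h; ring
    · rw [if_neg h, if_neg (fun hc => h hc.symm)]; ring
  · intro x
    simp [Rop, Fin.sum_univ_two]
    ring
  · intro x i
    have hsplit : ∀ j : Fin 2, pd (fun y => Rop u y i j) j x
        = pd (fun y => pd (fun z => u z i) j y) j x
          + pd (fun y => pd (fun z => u z j) i y) j x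
          - pd (fun y => if i = j then ∑ l, pd (fun z => u z l) l y else 0) j x := by
      intro j
      have e : (fun y => Rop u y i j)
          = fun y => (pd (fun z => u z i) j y + pd (fun z => u z j) i y)
            - (if i = j then ∑ l, pd (fun z => u z l) l y else 0) := rfl
      rw [e, pd_sub, pd_add]
      · exact ((hpdij i j).differentiable (by simp) x)
      · exact ((hpdij j i).differentiable (by simp) x)
      · exact (((hpdij i j).add (hpdij j i)).differentiable (by simp) x)
      · by_cases h : i = j
        · simp only [if_pos h]
          exact (hdivu.differentiable (by simp) x)
        · simp only [if_neg h]
          exact differentiableAt_const 0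
    rw [Finset.sum_congr rfl (fun j _ => hsplit j)]
    rw [Finset.sum_sub_distrib, Finset.sum_add_distrib]
    have h1 : (∑ j, pd (fun y => pd (fun z => u z i) j y) j x)
        = v x i - torusAvg (fun y => v y i) := hupoisson x i
    have h3 : (∑ j : Fin 2, pd (fun y => if i = j then ∑ l, pd (fun z => u z l) l y else 0) j x)
        = pd (fun y => ∑ l, pd (fun z => u z l) l y) i x := by
      rw [Finset.sum_eq_single i]
      · congr 1
        funext y
        rw [if_pos rfl]
      · intro j _ hj
        have e0 : (fun y => if i = j then (∑ l, pd (fun z => u z l) l y) else 0)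
            = fun _ : Fin 2 → ℝ => (0 : ℝ) := by
          funext y; rw [if_neg (Ne.symm hj)]
        rw [e0]
        unfold pd
        simp
      · simp
    have h2 : (∑ j, pd (fun y => pd (fun z => u z j) i y) j x)
        = pd (fun y => ∑ l, pd (fun z => u z l) l y) i x := by
      rw [pd_sum (fun l => ((hpdij l l).differentiable (by simp) x)) i]
      exact Finset.sum_congr rfl fun j _ => pd_pd_symm (hui j) i j x
    rw [h1, h2, h3]
    ring
end
end
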